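/- arXiv:1310.8122 — 2 statements merged into one kernel-verified Lean document; each statement's English description precedes it below -/
import Mathlib

section
/- Let l ≥ 1, (S_δ)_{δ≥1} real numbers, s_0 = l, s_ν = l(1 + Σ_{μ=0}^{ν−1} s_μ) − S_ν for ν ≥ 1, and ℓ_ν = 1 + Σ_{μ=0}^{ν−1} s_μ. Then for every ν ≥ 1, ℓ_ν = (l+1)^ν · (1 − Σ_{δ=1}^{ν−1} S_δ/(l+1)^{δ+1}). -/
open Finset

theorem eq_pow_mul_one_sub_sum_of_succ_eq_mul_sub {K : Type*} [Field K] {c : K} (hc : c ≠ 0)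
    {x S : ℕ → K} (h1 : x 1 = c) (hsucc : ∀ n ≥ 1, x (n + 1) = c * x n - S n) :
    ∀ n ≥ 1, x n = c ^ n * (1 - ∑ δ ∈ Ico 1 n, S δ / c ^ (δ + 1)) := by
  refine Nat.le_induction (by simp [h1]) fun n hn ih => ?_
  rw [hsucc n hn, ih, sum_Ico_succ_top hn]
  field_simp
  ring

theorem stmt_2_general (l : ℕ) (S s L : ℕ → ℝ)
    (h0 : s 0 = l)
    (hrec : ∀ ν ≥ 1, s ν = l * (1 + ∑ μ ∈ range ν, s μ) - S ν)
    (hL : ∀ ν, L ν = 1 + ∑ μ ∈ range ν, s μ) :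
    ∀ ν ≥ 1, L ν = ((l : ℝ) + 1) ^ ν
      * (1 - ∑ δ ∈ Ico 1 ν, S δ / ((l : ℝ) + 1) ^ (δ + 1)) := by
  have hL1 : L 1 = l + 1 := by simp [hL, h0, add_comm]
  have hLsucc : ∀ ν ≥ 1, L (ν + 1) = (l + 1) * L ν - S ν := fun ν hν => by
    rw [hL, hL, sum_range_succ, hrec ν hν]
    ring
  exact eq_pow_mul_one_sub_sum_of_succ_eq_mul_sub (by positivity) hL1 hLsucc

/-- Key identity: `ℓ ν = (l+1)^ν (1 - ∑_{δ=1}^{ν-1} S δ / (l+1)^{δ+1})`. -/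
theorem stmt_2 (l : ℕ) (hl : 1 ≤ l) (S s L : ℕ → ℝ)
    (h0 : s 0 = l)
    (hrec : ∀ ν ≥ 1, s ν = l * (1 + ∑ μ ∈ range ν, s μ) - S ν)
    (hL : ∀ ν, L ν = 1 + ∑ μ ∈ range ν, s μ) :
    ∀ ν ≥ 1, L ν = ((l : ℝ) + 1) ^ ν
      * (1 - ∑ δ ∈ Ico 1 ν, S δ / ((l : ℝ) + 1) ^ (δ + 1)) :=
  stmt_2_general l S s L h0 hrec hL
end

section
/- Let f : [a,b] → [a,b] be continuous. Then there exist a' ≤ a, b' ≥ b and a continuous map F : [a',b'] → [a',b'] such that F restricted to [a,b] equals f, F({a',b'}) ⊆ {a',b'}, and the topological entropy satisfies h(F) = h(f). -/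
/-!
Outside `[a, b]` extend `f` affinely with slope `2`, through `(a, f a)` and `(b, f b)`. The new
endpoints `2 * a - f a` and `2 * b - f b` are repelling fixed points, and a point of
`[2 * a - f a, a]` at distance `r` from the fixed point is doubled away from it until, after
about `log₂ (1 / r)` steps, it lands in `[a, f a] ⊆ [a, b]` and follows `f` from then on.
So an `(n, ε)`-cover of that piece consists, for each of the `n` possible landing times, of
`O(1 / ε)` intervals refined by an `(n, ε / 2)`-cover of `[a, b]`, plus `O(1 / ε)` intervals
for the points that do not land before time `n`. The factor `O(n)` is invisible to exponential
growth. The right piece is the left piece of the conjugate map `x ↦ -F (-x)`, and the entropy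
of a union of sets is the maximum of their entropies.
-/

open Dynamics Set Function Filter
open scoped SetRel ENNReal Topology

namespace Dynamics

variable {X : Type*} {T : X → X} {U : SetRel X X} {P K : Set X} {k n : ℕ}

lemma mem_dynEntourage_add {x y : X} (hk : (x, y) ∈ dynEntourage T U k)
    (hn : (T^[k] x, T^[k] y) ∈ dynEntourage T U n) : (x, y) ∈ dynEntourage T U (n + k) := by
  rw [mem_dynEntourage] at hk hn ⊢
  intro j hj
  rcases lt_or_ge j k with hjk | hkj
  · exact hk j hjk
  · obtain ⟨i, rfl⟩ := Nat.exists_eq_add_of_le' hkj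
    simpa only [iterate_add_apply] using hn i (by omega)

lemma IsDynCoverOf.exists_of_mapsTo_iterate [U.IsSymm] (hPK : MapsTo T^[k] P K) {s t : Finset X}
    (hs : IsDynCoverOf T P U k s) (ht : IsDynCoverOf T K U n t) :
    ∃ r : Finset X, IsDynCoverOf T P (U ○ U) (n + k) r ∧ r.card ≤ s.card * t.card := by
  classical
  let piece : X × X → Set X := fun cd ↦
    {x ∈ P | (x, cd.1) ∈ dynEntourage T U k ∧ (T^[k] x, cd.2) ∈ dynEntourage T U n}
  let rep : X × X → X := fun cd ↦ if h : (piece cd).Nonempty then h.some else cd.1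
  refine ⟨(s ×ˢ t).image rep, fun x hx ↦ ?_,
    Finset.card_image_le.trans (Finset.card_product _ _).le⟩
  obtain ⟨c, hc, hxc⟩ := hs hx
  obtain ⟨d, hd, hxd⟩ := ht (hPK hx)
  have hx_piece : x ∈ piece (c, d) := ⟨hx, hxc, hxd⟩
  have hrep : rep (c, d) ∈ piece (c, d) := by
    have hne : (piece (c, d)).Nonempty := ⟨x, hx_piece⟩
    simpa only [rep, dif_pos hne] using hne.some_mem
  refine ⟨rep (c, d), by simpa using ⟨c, d, ⟨hc, hd⟩, rfl⟩, ?_⟩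
  apply mem_dynEntourage_add
  · exact dynEntourage_comp_subset T U U k ⟨c, hxc, SetRel.symm _ hrep.2.1⟩
  · exact dynEntourage_comp_subset T U U n ⟨d, hxd, SetRel.symm _ hrep.2.2⟩

lemma coverMincard_le_mul_of_mapsTo_iterate [U.IsSymm] (hPK : MapsTo T^[k] P K) :
    coverMincard T P (U ○ U) (n + k) ≤ coverMincard T P U k * coverMincard T K U n := by
  rcases P.eq_empty_or_nonempty with rfl | hP
  · simp [coverMincard_empty]
  have hK : K.Nonempty := (hP.image _).mono hPK.image_subset
  rcases eq_top_or_lt_top (coverMincard T P U k) with hs | hs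
  · rw [hs, ENat.top_mul (Order.one_le_iff_ne_zero.1 ((one_le_coverMincard_iff T K U n).2 hK))]
    exact le_top
  rcases eq_top_or_lt_top (coverMincard T K U n) with ht | ht
  · rw [ht, ENat.mul_top (Order.one_le_iff_ne_zero.1 ((one_le_coverMincard_iff T P U k).2 hP))]
    exact le_top
  obtain ⟨s, hs_cover, hs_card⟩ := (coverMincard_finite_iff T P U k).1 hs
  obtain ⟨t, ht_cover, ht_card⟩ := (coverMincard_finite_iff T K U n).1 ht
  obtain ⟨r, hr_cover, hr_card⟩ := hs_cover.exists_of_mapsTo_iterate hPK ht_cover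
  rw [← hs_card, ← ht_card]
  exact hr_cover.coverMincard_le_card.trans (by exact_mod_cast hr_card)

lemma coverMincard_biUnion_le {ι : Type*} (s : Finset ι) (F : ι → Set X) (U : SetRel X X)
    (n : ℕ) : coverMincard T (⋃ i ∈ s, F i) U n ≤ ∑ i ∈ s, coverMincard T (F i) U n := by
  classical
  induction s using Finset.induction_on with
  | empty => simp [coverMincard_empty]
  | insert i s hi ih =>
    rw [Finset.set_biUnion_insert, Finset.sum_insert hi]
    exact (coverMincard_union_le T _ _ U n).trans (add_le_add le_rfl ih)

lemma coverEntropy_congr_of_mapsTo [UniformSpace X] {S : X → X} {F : Set X} (hT : MapsTo T F F)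
    (h : EqOn T S F) : coverEntropy T F = coverEntropy S F := by
  have hS : MapsTo S F F := fun x hx ↦ h hx ▸ hT hx
  rw [← coverEntropy_restrict hT, ← coverEntropy_restrict hS]
  congr 1
  funext x
  exact Subtype.ext (h x.2)

lemma coverEntropy_conj_neg {G : Type*} [AddGroup G] [UniformSpace G] [IsUniformAddGroup G]
    (T : G → G) (s : Set G) : coverEntropy (fun x ↦ -T (-x)) (-s) = coverEntropy T s := by
  have key (T : G → G) (s : Set G) : coverEntropy (fun x ↦ -T (-x)) (-s) ≤ coverEntropy T s := by
    rw [← image_neg_eq_neg]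
    exact coverEntropy_image_le_of_uniformContinuous (fun x ↦ by simp) uniformContinuous_neg s
  refine (key T s).antisymm ?_
  simpa using key (fun x ↦ -T (-x)) (-s)

end Dynamics

namespace ExpGrowth

lemma expGrowthSup_natCast_add_one : expGrowthSup (fun n : ℕ ↦ (n + 1 : ℝ≥0∞)) = 0 := by
  have hreal : Tendsto (fun n : ℕ ↦ Real.log (n + 1) / n) atTop (𝓝 0) := by
    have h := (Real.tendsto_pow_log_div_mul_add_atTop 1 (-1) 1 one_ne_zero).comp
      (tendsto_atTop_add_const_right atTop 1 tendsto_natCast_atTop_atTop)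
    refine h.congr fun n ↦ ?_
    simp
  refine Tendsto.limsup_eq ?_
  refine ((continuous_coe_real_ereal.tendsto 0).comp hreal).congr fun n ↦ ?_
  have : (n + 1 : ℝ≥0∞) = ENNReal.ofReal (n + 1) := by
    rw [ENNReal.ofReal_add (by positivity) zero_le_one]; simp
  simp only [comp_apply, this, ENNReal.log_ofReal_of_pos (by positivity : (0 : ℝ) < n + 1)]
  norm_cast

lemma expGrowthSup_le_of_le_mul_add_one {u v : ℕ → ℝ≥0∞} {b : ℝ≥0∞} (hb : b ≠ ∞)
    (h : ∀ n, u n ≤ b * ((n + 1) * v n)) : expGrowthSup u ≤ expGrowthSup v := by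
  refine (expGrowthSup_le_of_eventually_le hb (Eventually.of_forall h)).trans ?_
  refine (expGrowthSup_mul_le ?_ ?_).trans_eq ?_ <;>
    simp [expGrowthSup_natCast_add_one]

end ExpGrowth

instance SetRel.isSymm_dist_lt {X : Type*} [PseudoMetricSpace X] (δ : ℝ) :
    SetRel.IsSymm {p : X × X | dist p.1 p.2 < δ} where
  symm _ _ h := (dist_comm _ _).trans_lt h

lemma coverMincard_Icc_le_of_dist_iterate_le {T : ℝ → ℝ} {u v L δ c : ℝ} {m : ℕ} (hL : 0 < L)
    (hδ : 0 < δ)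
    (hT : ∀ x ∈ Icc u v, ∀ y ∈ Icc u v, ∀ j < m, dist (T^[j] x) (T^[j] y) ≤ L * dist x y)
    (hc : L * (v - u) ≤ c * δ) :
    coverMincard T (Icc u v) {p | dist p.1 p.2 < δ} m ≤ ⌊c⌋₊ + 1 := by
  set r := δ / L with hr_def
  have hr : 0 < r := div_pos hδ hL
  let t := (Finset.range (⌊c⌋₊ + 1)).image fun i : ℕ ↦ u + i * r
  have ht : IsDynCoverOf T (Icc u v) {p | dist p.1 p.2 < δ} m t := by
    intro x hx
    set i := ⌊(x - u) / r⌋₊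
    have hxu : 0 ≤ (x - u) / r := div_nonneg (by linarith [hx.1]) hr.le
    have hi_le : (i : ℝ) * r ≤ x - u := (le_div_iff₀ hr).1 (Nat.floor_le hxu)
    have hi_gt : x - u < (i + 1) * r := (div_lt_iff₀ hr).1 (Nat.lt_floor_add_one _)
    have hi_c : i ≤ ⌊c⌋₊ := by
      refine Nat.floor_le_floor
        ((div_le_div_of_nonneg_right (sub_le_sub_right hx.2 u) hr.le).trans ?_)
      rw [hr_def, div_div_eq_mul_div, div_le_iff₀ hδ, mul_comm]
      exact hc
    have hz : u + i * r ∈ Icc u v := ⟨by nlinarith [hr], by linarith [hx.2]⟩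
    refine ⟨u + i * r, Finset.mem_image_of_mem _ (Finset.mem_range.2 (Nat.lt_succ_of_le hi_c)), ?_⟩
    refine mem_dynEntourage.2 fun j hj ↦ (hT x hx _ hz j hj).trans_lt ?_
    calc L * dist x (u + i * r) < L * r := by
          gcongr
          rw [Real.dist_eq, abs_lt]
          constructor <;> linarith
      _ = δ := by rw [hr_def]; field_simp
  exact ht.coverMincard_le_card.trans (by exact_mod_cast Finset.card_image_le.trans_eq (by simp))

section Doubling

variable {T : ℝ → ℝ} {p q : ℝ}

lemma iterate_eq_of_doubling (hT : ∀ x ∈ Icc p q, T x = p + 2 * (x - p)) {k j : ℕ}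
    (hj : j ≤ k + 1) {x : ℝ} (hx : x ∈ Icc p (p + (q - p) / 2 ^ k)) :
    T^[j] x = p + 2 ^ j * (x - p) := by
  induction j with
  | zero => simp
  | succ j ih =>
    have hxp : 0 ≤ x - p := by linarith [hx.1]
    have hjx : 2 ^ j * (x - p) ≤ q - p :=
      calc 2 ^ j * (x - p) ≤ 2 ^ k * (x - p) := by gcongr; norm_num; omega
        _ ≤ 2 ^ k * ((q - p) / 2 ^ k) := by gcongr; linarith [hx.2]
        _ = q - p := by field_simp
    rw [iterate_succ_apply', ih (by omega),
      hT _ ⟨le_add_of_nonneg_right (by positivity), by linarith⟩]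
    ring

lemma dist_iterate_le_of_doubling (hT : ∀ x ∈ Icc p q, T x = p + 2 * (x - p)) {k j : ℕ}
    (hj : j ≤ k) {x y : ℝ} (hx : x ∈ Icc p (p + (q - p) / 2 ^ k))
    (hy : y ∈ Icc p (p + (q - p) / 2 ^ k)) :
    dist (T^[j] x) (T^[j] y) ≤ 2 ^ k * dist x y := by
  rw [iterate_eq_of_doubling hT (by omega) hx, iterate_eq_of_doubling hT (by omega) hy,
    Real.dist_eq, Real.dist_eq, show p + 2 ^ j * (x - p) - (p + 2 ^ j * (y - p)) = 2 ^ j * (x - y)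
      by ring, abs_mul, abs_of_pos (by positivity)]
  exact mul_le_mul_of_nonneg_right (pow_le_pow_right₀ one_le_two hj) (abs_nonneg _)

lemma Icc_subset_doubling_pieces (n : ℕ) :
    Icc p q ⊆ Icc p (p + (q - p) / 2 ^ n) ∪
      ⋃ k ∈ Finset.range n, Icc (p + (q - p) / 2 ^ (k + 1)) (p + (q - p) / 2 ^ k) := by
  induction n with
  | zero => simp
  | succ n ih =>
    refine ih.trans (union_subset (fun x hx ↦ ?_) (fun x hx ↦ ?_))
    · rcases le_total x (p + (q - p) / 2 ^ (n + 1)) with h | h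
      · exact Or.inl ⟨hx.1, h⟩
      · exact Or.inr (mem_biUnion (Finset.mem_range.2 n.lt_succ_self) ⟨h, hx.2⟩)
    · rw [Finset.range_add_one, Finset.set_biUnion_insert]
      exact Or.inr (Or.inr hx)

lemma coverMincard_Icc_le_of_doubling (hT : ∀ x ∈ Icc p q, T x = p + 2 * (x - p)) (hpq : p ≤ q)
    {K : Set ℝ} (hK : Icc q (2 * q - p) ⊆ K) {ε : ℝ} (hε : 0 < ε) (n : ℕ) :
    coverMincard T (Icc p q) {x | dist x.1 x.2 < ε} n ≤
      (⌊(q - p) / ε⌋₊ + 1) * ((n + 1) * coverMincard T K {x | dist x.1 x.2 < ε / 2} n) := by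
  set C : ℕ∞ := ⌊(q - p) / ε⌋₊ + 1
  set M := coverMincard T K {x | dist x.1 x.2 < ε / 2} n
  have hM : 1 ≤ M := (one_le_coverMincard_iff _ _ _ _).2 ⟨q, hK ⟨le_rfl, by linarith⟩⟩
  -- The first interval stays in the affine region for `n` steps; the `k`-th one reaches
  -- `Icc q (2 * q - p) ⊆ K` at time `k + 1`.
  have hdeep : coverMincard T (Icc p (p + (q - p) / 2 ^ n)) {x | dist x.1 x.2 < ε} n ≤ C :=
    coverMincard_Icc_le_of_dist_iterate_le (L := 2 ^ n) (by positivity) hε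
      (fun x hx y hy j hj ↦ dist_iterate_le_of_doubling hT hj.le hx hy)
      (le_of_eq (by field_simp; ring))
  have hpiece (k : ℕ) : coverMincard T (Icc (p + (q - p) / 2 ^ (k + 1)) (p + (q - p) / 2 ^ k))
      {x | dist x.1 x.2 < ε} n ≤ C * M := by
    set P := Icc (p + (q - p) / 2 ^ (k + 1)) (p + (q - p) / 2 ^ k)
    have hP : P ⊆ Icc p (p + (q - p) / 2 ^ k) :=
      Icc_subset_Icc_left (le_add_of_nonneg_right (by have := sub_nonneg.2 hpq; positivity))
    have hPK : MapsTo T^[k + 1] P K := fun x hx ↦ by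
      have hlo : q - p ≤ 2 ^ (k + 1) * (x - p) :=
        (div_le_iff₀' (by positivity)).1 (le_sub_iff_add_le'.2 hx.1)
      have hhi : 2 ^ k * (x - p) ≤ q - p :=
        (le_div_iff₀' (by positivity)).1 (sub_le_iff_le_add'.2 hx.2)
      refine hK ?_
      rw [iterate_eq_of_doubling hT le_rfl (hP hx)]
      have hdouble : (2 : ℝ) ^ (k + 1) * (x - p) = 2 * (2 ^ k * (x - p)) := by ring
      constructor <;> linarith
    have hcomp : {x : ℝ × ℝ | dist x.1 x.2 < ε / 2} ○ {x | dist x.1 x.2 < ε / 2} ⊆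
        {x | dist x.1 x.2 < ε} := by
      rintro ⟨x, y⟩ ⟨z, hxz, hzy⟩
      exact (dist_triangle x z y).trans_lt (by simp only [mem_ofPred_eq] at *; linarith)
    calc _ ≤ coverMincard T P ({x | dist x.1 x.2 < ε / 2} ○ {x | dist x.1 x.2 < ε / 2})
          (n + (k + 1)) :=
          (coverMincard_antitone T P n hcomp).trans (coverMincard_monotone_time T P _ (by omega))
      _ ≤ coverMincard T P {x | dist x.1 x.2 < ε / 2} (k + 1) * M :=
          coverMincard_le_mul_of_mapsTo_iterate hPK
      _ ≤ C * M := by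
          gcongr
          exact coverMincard_Icc_le_of_dist_iterate_le (L := 2 ^ k) (by positivity) (half_pos hε)
            (fun x hx y hy j hj ↦ dist_iterate_le_of_doubling hT (by omega) (hP hx) (hP hy))
            (le_of_eq (by field_simp; ring))
  calc coverMincard T (Icc p q) {x | dist x.1 x.2 < ε} n
      ≤ coverMincard T (Icc p (p + (q - p) / 2 ^ n) ∪
          ⋃ k ∈ Finset.range n, Icc (p + (q - p) / 2 ^ (k + 1)) (p + (q - p) / 2 ^ k))
          {x | dist x.1 x.2 < ε} n :=
        coverMincard_monotone_subset T _ n (Icc_subset_doubling_pieces n)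
    _ ≤ C + ∑ k ∈ Finset.range n, C * M :=
        (coverMincard_union_le T _ _ _ n).trans (add_le_add hdeep
          ((coverMincard_biUnion_le _ _ _ n).trans (Finset.sum_le_sum fun k _ ↦ hpiece k)))
    _ ≤ C * M + n * (C * M) := by
        rw [Finset.sum_const, Finset.card_range, nsmul_eq_mul]
        gcongr
        exact le_mul_of_one_le_right' hM
    _ = C * ((n + 1) * M) := by ring

lemma coverEntropy_Icc_le_of_doubling (hT : ∀ x ∈ Icc p q, T x = p + 2 * (x - p)) (hpq : p ≤ q)
    {K : Set ℝ}
    (hK : Icc q (2 * q - p) ⊆ K) : coverEntropy T (Icc p q) ≤ coverEntropy T K := by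
  rw [coverEntropy_eq_iSup_basis Metric.uniformity_basis_dist]
  refine iSup₂_le fun ε hε ↦ le_trans ?_
    (coverEntropyEntourage_le_coverEntropy T K (Metric.dist_mem_uniformity (half_pos hε)))
  refine ExpGrowth.expGrowthSup_le_of_le_mul_add_one (b := ⌊(q - p) / ε⌋₊ + 1) (by simp)
    fun n ↦ ?_
  simpa using ENat.toENNReal_mono (coverMincard_Icc_le_of_doubling hT hpq hK hε n)

end Doubling

noncomputable def doublingExtension (a b : ℝ) (f : ℝ → ℝ) (x : ℝ) : ℝ :=
  f (max a (min b x)) + 2 * (x - max a (min b x))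

section DoublingExtension

variable {a b : ℝ} {f : ℝ → ℝ}

lemma doublingExtension_of_mem {x : ℝ} (hx : x ∈ Icc a b) : doublingExtension a b f x = f x := by
  simp [doublingExtension, min_eq_right hx.2, max_eq_right hx.1]

lemma doublingExtension_of_le (hab : a ≤ b) {x : ℝ} (hx : x ≤ a) :
    doublingExtension a b f x = f a + 2 * (x - a) := by
  simp [doublingExtension, min_eq_right (hx.trans hab), max_eq_left hx]

lemma doublingExtension_of_ge (hab : a ≤ b) {x : ℝ} (hx : b ≤ x) :
    doublingExtension a b f x = f b + 2 * (x - b) := by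
  simp [doublingExtension, min_eq_left hx, max_eq_right hab]

lemma continuous_doublingExtension (hab : a ≤ b) (hf : ContinuousOn f (Icc a b)) :
    Continuous (doublingExtension a b f) := by
  have hclamp : Continuous fun x : ℝ ↦ max a (min b x) := by fun_prop
  exact (hf.comp_continuous hclamp fun x ↦ ⟨le_max_left _ _, max_le hab (min_le_left _ _)⟩).add
    (by fun_prop)

lemma isFixedPt_doublingExtension_left (hab : a ≤ b) (ha : a ≤ f a) :
    IsFixedPt (doublingExtension a b f) (2 * a - f a) := by
  rw [IsFixedPt, doublingExtension_of_le hab (by linarith)]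
  ring

lemma isFixedPt_doublingExtension_right (hab : a ≤ b) (hb : f b ≤ b) :
    IsFixedPt (doublingExtension a b f) (2 * b - f b) := by
  rw [IsFixedPt, doublingExtension_of_ge hab (by linarith)]
  ring

lemma mapsTo_doublingExtension (hab : a ≤ b) (hmap : MapsTo f (Icc a b) (Icc a b)) :
    MapsTo (doublingExtension a b f) (Icc (2 * a - f a) (2 * b - f b))
      (Icc (2 * a - f a) (2 * b - f b)) := by
  obtain ⟨hfa, hfa'⟩ := hmap (left_mem_Icc.2 hab)
  obtain ⟨hfb, hfb'⟩ := hmap (right_mem_Icc.2 hab)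
  intro x hx
  rcases le_total x a with hxa | hax
  · rw [doublingExtension_of_le hab hxa]
    constructor <;> linarith [hx.1]
  rcases le_total b x with hbx | hxb
  · rw [doublingExtension_of_ge hab hbx]
    constructor <;> linarith [hx.2]
  · rw [doublingExtension_of_mem ⟨hax, hxb⟩]
    obtain ⟨h₁, h₂⟩ := hmap ⟨hax, hxb⟩
    constructor <;> linarith

lemma coverEntropy_doublingExtension (hab : a ≤ b) (hmap : MapsTo f (Icc a b) (Icc a b)) :
    coverEntropy (doublingExtension a b f) (Icc (2 * a - f a) (2 * b - f b)) =
      coverEntropy f (Icc a b) := by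
  obtain ⟨hfa, hfa'⟩ := hmap (left_mem_Icc.2 hab)
  obtain ⟨hfb, hfb'⟩ := hmap (right_mem_Icc.2 hab)
  have hmid : coverEntropy (doublingExtension a b f) (Icc a b) = coverEntropy f (Icc a b) :=
    coverEntropy_congr_of_mapsTo (fun x hx ↦ by rw [doublingExtension_of_mem hx]; exact hmap hx)
      fun x hx ↦ doublingExtension_of_mem hx
  have hleft : coverEntropy (doublingExtension a b f) (Icc (2 * a - f a) a) ≤
      coverEntropy (doublingExtension a b f) (Icc a b) :=
    coverEntropy_Icc_le_of_doubling
      (fun x hx ↦ by rw [doublingExtension_of_le hab hx.2]; ring) (by linarith)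
      (Icc_subset_Icc le_rfl (by linarith))
  have hright : coverEntropy (doublingExtension a b f) (Icc b (2 * b - f b)) ≤
      coverEntropy (doublingExtension a b f) (Icc a b) := by
    rw [← coverEntropy_conj_neg _ (Icc b _), ← coverEntropy_conj_neg _ (Icc a b), neg_Icc,
      neg_Icc]
    exact coverEntropy_Icc_le_of_doubling
      (fun x hx ↦ by rw [doublingExtension_of_ge hab (by linarith [hx.2])]; ring) (by linarith)
      (Icc_subset_Icc le_rfl (by linarith))
  rw [← Icc_union_Icc_eq_Icc (show 2 * a - f a ≤ a by linarith)
      (show a ≤ 2 * b - f b by linarith),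
    ← Icc_union_Icc_eq_Icc hab (show b ≤ 2 * b - f b by linarith), coverEntropy_union,
    coverEntropy_union, max_eq_left hright, max_eq_right hleft, hmid]

end DoublingExtension

/-- Continuous-map version of Lemma 2: any continuous selfmap of `[a,b]` extends to a
boundary-anchored continuous selfmap of a larger interval `[a',b']` with the same
topological entropy. -/
theorem stmt_16 (a b : ℝ) (hab : a ≤ b) (f : ℝ → ℝ)
    (hf : ContinuousOn f (Icc a b)) (hmap : MapsTo f (Icc a b) (Icc a b)) :
    ∃ a' ≤ a, ∃ b' ≥ b, ∃ F : ℝ → ℝ,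
      ContinuousOn F (Icc a' b') ∧ MapsTo F (Icc a' b') (Icc a' b') ∧
      EqOn F f (Icc a b) ∧ F '' {a', b'} ⊆ {a', b'} ∧
      coverEntropy F (Icc a' b') = coverEntropy f (Icc a b) := by
  obtain ⟨hfa, -⟩ := hmap (left_mem_Icc.2 hab)
  obtain ⟨-, hfb⟩ := hmap (right_mem_Icc.2 hab)
  refine ⟨2 * a - f a, by linarith, 2 * b - f b, by linarith, doublingExtension a b f,
    (continuous_doublingExtension hab hf).continuousOn, mapsTo_doublingExtension hab hmap,
    fun x hx ↦ doublingExtension_of_mem hx, ?_, coverEntropy_doublingExtension hab hmap⟩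
  rintro _ ⟨x, rfl | rfl, rfl⟩
  · exact Or.inl (isFixedPt_doublingExtension_left hab hfa)
  · exact Or.inr (isFixedPt_doublingExtension_right hab hfb)
end
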